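/- Let f be the bilinear RFIF from the bilinear RFIF setup. Then for each (i,j) there exists a constant C_{ij} ≥ 0 such that for all n ≥ 1, all 1≤k,ℓ≤KⁿN with Dⁿ_{kℓ} ⊆ D'_{ij}, and any fixed point (x̄,ȳ)∈Dⁿ_{kℓ}, the oscillation of f over the image square satisfies O(f, (u_i×v_j)(Dⁿ_{kℓ})) ≤ |S(u_i(x̄),v_j(ȳ))|·O(f, Dⁿ_{kℓ}) + 2√2·C_{ij}·ε_n, where ε_n = 1/(KⁿN); one may take C_{ij} to be the supremum over (x,y) in the interior of D'_{ij} and z*∈[−M*,M*] (M* = max|f|) of the Euclidean norm of the gradient in (x,y) of the map (x,y) ↦ F_{ij}(x,y,z*). -/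
import Mathlib


/- Bilinear recurrent fractal interpolation surfaces on [0,1]² (Liang–Ruan,
   "Construction and box dimension of recurrent fractal interpolation surfaces"). -/

noncomputable section
open Set Filter

namespace RFIS

/-- The grid point `x_i = i / N` (also used for `y_j = j / N`). -/
def xg (N i : ℕ) : ℝ := (i : ℝ) / (N : ℝ)

/-- The interval `I_i = [x_{i-1}, x_i]` (also `J_j`). -/
def Ii (N i : ℕ) : Set ℝ := Icc (xg N (i - 1)) (xg N i)

/-- The unit square `[0,1]²`. -/
def sq : Set (ℝ × ℝ) := Icc (0 : ℝ) 1 ×ˢ Icc (0 : ℝ) 1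

/-- The cell `D_{ij} = I_i × J_j`. -/
def Dij (N i j : ℕ) : Set (ℝ × ℝ) := Ii N i ×ˢ Ii N j

/-- The point `x'_i = x_{px i}` chosen from the grid. -/
def xp (N : ℕ) (px : ℕ → ℕ) (i : ℕ) : ℝ := xg N (px i)

/-- The interval `I'_i`, with endpoints `x'_{i-1}` and `x'_i`. -/
def Ii' (N : ℕ) (px : ℕ → ℕ) (i : ℕ) : Set ℝ := uIcc (xp N px (i - 1)) (xp N px i)

/-- The domain `D'_{ij} = I'_i × J'_j`. -/
def Dij' (N : ℕ) (px py : ℕ → ℕ) (i j : ℕ) : Set (ℝ × ℝ) := Ii' N px i ×ˢ Ii' N py j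

/-- The affine map `u_i : I'_i → I_i` with `u_i(x'_{i-1}) = x_{i-1}` and `u_i(x'_i) = x_i`
(also used for `v_j`). -/
def usub (N : ℕ) (px : ℕ → ℕ) (i : ℕ) (t : ℝ) : ℝ :=
  xg N (i - 1) + (t - xp N px (i - 1)) * ((xg N i - xg N (i - 1)) / (xp N px i - xp N px (i - 1)))

/-- `F` is bilinear on `E`: of the form `a + b x + c y + d x y` on `E`. -/
def IsBilinearOn (F : ℝ × ℝ → ℝ) (E : Set (ℝ × ℝ)) : Prop :=
  ∃ a b c d : ℝ, ∀ p ∈ E, F p = a + b * p.1 + c * p.2 + d * p.1 * p.2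

/-- The bilinear RFIF setup on `[0,1]²`: data `z_{ij}` on the uniform `N × N` grid
(`M = N`, `x_i = y_i = i/N`), vertical scaling factors `s_{ij}` with `|s_{ij}| < 1`,
the points `x'_i = x_{px i}`, `y'_j = y_{py j}` with `|I'_i| = K |I_i|`, `|J'_j| = K |J_j|`
and the domains `D'_{ij}` pairwise equal or with disjoint interiors; the functions `S`, `h`
bilinear on each cell with the prescribed grid values, the bilinear functions `g_{ij}` with
corner values `z'`, and the bilinear RFIF `f`: the continuous function interpolating the
data and satisfying `f(u_i x, v_j y) = S(u_i x, v_j y)(f(x,y) − g_{ij}(x,y)) + h(u_i x, v_j y)`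
on each `D'_{ij}`. -/
structure Setup where
  N : ℕ
  K : ℕ
  hN : 2 ≤ N
  hK : 2 ≤ K
  px : ℕ → ℕ
  py : ℕ → ℕ
  hpx : ∀ i ≤ N, px i ≤ N
  hpy : ∀ j ≤ N, py j ≤ N
  hKx : ∀ i, 1 ≤ i → i ≤ N → |xp N px i - xp N px (i - 1)| = (K : ℝ) * (xg N i - xg N (i - 1))
  hKy : ∀ j, 1 ≤ j → j ≤ N → |xp N py j - xp N py (j - 1)| = (K : ℝ) * (xg N j - xg N (j - 1))
  hdisj : ∀ i₁ j₁ i₂ j₂, 1 ≤ i₁ → i₁ ≤ N → 1 ≤ j₁ → j₁ ≤ N → 1 ≤ i₂ → i₂ ≤ N → 1 ≤ j₂ → j₂ ≤ N →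
    Dij' N px py i₁ j₁ = Dij' N px py i₂ j₂ ∨
      interior (Dij' N px py i₁ j₁) ∩ interior (Dij' N px py i₂ j₂) = ∅
  z : ℕ → ℕ → ℝ
  s : ℕ → ℕ → ℝ
  hs : ∀ i ≤ N, ∀ j ≤ N, |s i j| < 1
  S : ℝ × ℝ → ℝ
  hScont : ContinuousOn S sq
  hSbil : ∀ i j, 1 ≤ i → i ≤ N → 1 ≤ j → j ≤ N → IsBilinearOn S (Dij N i j)
  hSval : ∀ i ≤ N, ∀ j ≤ N, S (xg N i, xg N j) = s i j
  h : ℝ × ℝ → ℝ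
  hhcont : ContinuousOn h sq
  hhbil : ∀ i j, 1 ≤ i → i ≤ N → 1 ≤ j → j ≤ N → IsBilinearOn h (Dij N i j)
  hhval : ∀ i ≤ N, ∀ j ≤ N, h (xg N i, xg N j) = z i j
  g : ℕ → ℕ → ℝ × ℝ → ℝ
  hgbil : ∀ i j, 1 ≤ i → i ≤ N → 1 ≤ j → j ≤ N → IsBilinearOn (g i j) (Dij' N px py i j)
  hgval : ∀ i j, 1 ≤ i → i ≤ N → 1 ≤ j → j ≤ N →
    ∀ k ∈ ({i - 1, i} : Set ℕ), ∀ l ∈ ({j - 1, j} : Set ℕ),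
      g i j (xp N px k, xp N py l) = z (px k) (py l)
  f : ℝ × ℝ → ℝ
  hfcont : ContinuousOn f sq
  hfval : ∀ i ≤ N, ∀ j ≤ N, f (xg N i, xg N j) = z i j
  hfeq : ∀ i j, 1 ≤ i → i ≤ N → 1 ≤ j → j ≤ N → ∀ p ∈ Dij' N px py i j,
    f (usub N px i p.1, usub N py j p.2)
      = S (usub N px i p.1, usub N py j p.2) * (f p - g i j p)
        + h (usub N px i p.1, usub N py j p.2)

/-- The oscillation `O(f, E) = sup {f(x') − f(x'') : x', x'' ∈ E}`. -/
def Osc (f : ℝ × ℝ → ℝ) (E : Set (ℝ × ℝ)) : ℝ :=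
  sSup {d : ℝ | ∃ p ∈ E, ∃ q ∈ E, d = f p - f q}

/-- The dyadic-type square `Dⁿ_{kl} = [(k-1)/(KⁿN), k/(KⁿN)] × [(l-1)/(KⁿN), l/(KⁿN)]`. -/
def Dn (N K n k l : ℕ) : Set (ℝ × ℝ) :=
  Icc (((k : ℝ) - 1) / ((K : ℝ) ^ n * (N : ℝ))) ((k : ℝ) / ((K : ℝ) ^ n * (N : ℝ))) ×ˢ
    Icc (((l : ℝ) - 1) / ((K : ℝ) ^ n * (N : ℝ))) ((l : ℝ) / ((K : ℝ) ^ n * (N : ℝ)))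

open Classical in
/-- `O(f, n, U) = Σ { O(f, Dⁿ_{kl}) : Dⁿ_{kl} ⊆ U }`. -/
def OscSum (f : ℝ × ℝ → ℝ) (N K n : ℕ) (U : Set (ℝ × ℝ)) : ℝ :=
  ∑ k ∈ Finset.Icc 1 (K ^ n * N), ∑ l ∈ Finset.Icc 1 (K ^ n * N),
    if Dn N K n k l ⊆ U then Osc f (Dn N K n k l) else 0

/-- The `ε`-coordinate cube `∏_{i=1}^3 [k_i ε, (k_i+1) ε]` in `ℝ³`. -/
def cube (ε : ℝ) (k : ℤ × ℤ × ℤ) : Set (ℝ × ℝ × ℝ) :=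
  Icc ((k.1 : ℝ) * ε) (((k.1 : ℝ) + 1) * ε) ×ˢ
    Icc ((k.2.1 : ℝ) * ε) (((k.2.1 : ℝ) + 1) * ε) ×ˢ
      Icc ((k.2.2 : ℝ) * ε) (((k.2.2 : ℝ) + 1) * ε)

/-- `N_E(ε)`: the number of `ε`-coordinate cubes intersecting `E`. -/
def Ncubes (E : Set (ℝ × ℝ × ℝ)) (ε : ℝ) : ℕ :=
  {k : ℤ × ℤ × ℤ | (cube ε k ∩ E).Nonempty}.ncard

/-- `log N_E(ε) / log (1/ε)`. -/
def boxRatio (E : Set (ℝ × ℝ × ℝ)) (ε : ℝ) : ℝ :=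
  Real.log (Ncubes E ε) / Real.log (1 / ε)

/-- The upper box dimension `lim sup_{ε→0+} log N_E(ε) / log (1/ε)`. -/
def upperBoxDim (E : Set (ℝ × ℝ × ℝ)) : ℝ :=
  limsup (boxRatio E) (nhdsWithin 0 (Ioi 0))

/-- The lower box dimension `lim inf_{ε→0+} log N_E(ε) / log (1/ε)`. -/
def lowerBoxDim (E : Set (ℝ × ℝ × ℝ)) : ℝ :=
  liminf (boxRatio E) (nhdsWithin 0 (Ioi 0))

/-- The box dimension of `E` exists and equals `d`. -/
def HasBoxDim (E : Set (ℝ × ℝ × ℝ)) (d : ℝ) : Prop :=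
  Tendsto (boxRatio E) (nhdsWithin 0 (Ioi 0)) (nhds d)

/-- The graph `Γ f|_E = {(x, y, f(x,y)) : (x,y) ∈ E}`. -/
def graphOn (f : ℝ × ℝ → ℝ) (E : Set (ℝ × ℝ)) : Set (ℝ × ℝ × ℝ) :=
  (fun p : ℝ × ℝ => (p.1, p.2, f p)) '' E

/-- `B` is a partition of `[0,1]²`: nonempty sets covering `[0,1]²` with pairwise
disjoint interiors. -/
def IsPartition (m : ℕ) (B : Fin m → Set (ℝ × ℝ)) : Prop :=
  (∀ r, (B r).Nonempty) ∧ (⋃ r, B r) = sq ∧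
    ∀ r t, r ≠ t → interior (B r) ∩ interior (B t) = ∅

/-- The partition `B` is compatible with `{D_{ij}, D'_{ij}}`: every `D_{ij}` lies in some
`B_r` and every `D'_{ij}` in some `B_t`; and whenever some `(i,j)` has `D_{ij} ⊆ B_r` and
`D'_{ij} ⊆ B_t`, then `B_t = ⋃ {D'_{kl} : D_{kl} ⊆ B_r, D'_{kl} ⊆ B_t}`. -/
def IsCompatible (st : Setup) {m : ℕ} (B : Fin m → Set (ℝ × ℝ)) : Prop :=
  (∀ i j, 1 ≤ i → i ≤ st.N → 1 ≤ j → j ≤ st.N →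
    (∃ r, Dij st.N i j ⊆ B r) ∧ (∃ t, Dij' st.N st.px st.py i j ⊆ B t)) ∧
  (∀ r t : Fin m,
    (∃ i j, 1 ≤ i ∧ i ≤ st.N ∧ 1 ≤ j ∧ j ≤ st.N ∧
      Dij st.N i j ⊆ B r ∧ Dij' st.N st.px st.py i j ⊆ B t) →
    B t = ⋃ (k : ℕ) (l : ℕ)
      (_ : 1 ≤ k ∧ k ≤ st.N ∧ 1 ≤ l ∧ l ≤ st.N ∧
        Dij st.N k l ⊆ B r ∧ Dij' st.N st.px st.py k l ⊆ B t),
      Dij' st.N st.px st.py k l)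

/-- The index set `Σ_N × Σ_N = {1,…,N}²`. -/
def idxS (N : ℕ) : Finset (ℕ × ℕ) := Finset.Icc 1 N ×ˢ Finset.Icc 1 N

open Classical in
/-- `Λ_r = {(i,j) : D_{ij} ⊆ B_r}`. -/
def Lam (st : Setup) {m : ℕ} (B : Fin m → Set (ℝ × ℝ)) (r : Fin m) : Finset (ℕ × ℕ) :=
  (idxS st.N).filter fun ij => Dij st.N ij.1 ij.2 ⊆ B r

open Classical in
/-- `Λ'_t = {(i,j) : D'_{ij} ⊆ B_t}`. -/
def Lam' (st : Setup) {m : ℕ} (B : Fin m → Set (ℝ × ℝ)) (t : Fin m) : Finset (ℕ × ℕ) :=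
  (idxS st.N).filter fun ij => Dij' st.N st.px st.py ij.1 ij.2 ⊆ B t

/-- The rectangle `[x_α, x_{α+K}] × [y_β, y_{β+K}]`. -/
def rect (N K α β : ℕ) : Set (ℝ × ℝ) :=
  Icc (xg N α) (xg N (α + K)) ×ˢ Icc (xg N β) (xg N (β + K))

open Classical in
/-- `Λ_r(α,β) = {(i,j) ∈ Λ_r : D'_{ij} = [x_α, x_{α+K}] × [y_β, y_{β+K}]}`. -/
def LamAB (st : Setup) {m : ℕ} (B : Fin m → Set (ℝ × ℝ)) (r : Fin m) (α β : ℕ) :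
    Finset (ℕ × ℕ) :=
  (Lam st B r).filter fun ij => Dij' st.N st.px st.py ij.1 ij.2 = rect st.N st.K α β

/-- The vertical scaling factors are steady: for each cell, the four corner factors are
all nonnegative or all nonpositive. -/
def Steady (st : Setup) : Prop :=
  ∀ i j, 1 ≤ i → i ≤ st.N → 1 ≤ j → j ≤ st.N →
    (0 ≤ st.s (i - 1) (j - 1) ∧ 0 ≤ st.s (i - 1) j ∧ 0 ≤ st.s i (j - 1) ∧ 0 ≤ st.s i j) ∨
    (st.s (i - 1) (j - 1) ≤ 0 ∧ st.s (i - 1) j ≤ 0 ∧ st.s i (j - 1) ≤ 0 ∧ st.s i j ≤ 0)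

/-- The sum `Σ_{(i,j) ∈ Λ_r(α,β)} |S(u_i(x_a), v_j(y_b))|`. -/
def cSum (st : Setup) {m : ℕ} (B : Fin m → Set (ℝ × ℝ)) (r : Fin m) (α β a b : ℕ) : ℝ :=
  ∑ ij ∈ LamAB st B r α β,
    |st.S (usub st.N st.px ij.1 (xg st.N a), usub st.N st.py ij.2 (xg st.N b))|

/-- The vertical scaling factors have uniform sums `γ_{rt}` under the partition `B`:
whenever `Λ_r ∩ Λ'_t ≠ ∅` and `[x_α, x_{α+K}] × [y_β, y_{β+K}] ∈ {D'_{ij} : (i,j) ∈ Λ_r ∩ Λ'_t}`,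
the four corner sums `Σ_{(i,j) ∈ Λ_r(α,β)} |S(u_i(x_a), v_j(y_b))|`,
`(a,b) ∈ {α, α+K} × {β, β+K}`, all equal `γ_{rt}`. -/
def HasUniformSums (st : Setup) {m : ℕ} (B : Fin m → Set (ℝ × ℝ))
    (γ : Fin m → Fin m → ℝ) : Prop :=
  ∀ r t : Fin m, (Lam st B r ∩ Lam' st B t).Nonempty →
    ∀ α β : ℕ, α + st.K ≤ st.N → β + st.K ≤ st.N →
      (∃ ij ∈ Lam st B r ∩ Lam' st B t,
        Dij' st.N st.px st.py ij.1 ij.2 = rect st.N st.K α β) →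
      cSum st B r α β α β = γ r t ∧ cSum st B r α β (α + st.K) β = γ r t ∧
      cSum st B r α β α (β + st.K) = γ r t ∧ cSum st B r α β (α + st.K) (β + st.K) = γ r t

/-- `γ_{rt} = 0` whenever `Λ_r ∩ Λ'_t = ∅`. -/
def GammaZero (st : Setup) {m : ℕ} (B : Fin m → Set (ℝ × ℝ))
    (γ : Fin m → Fin m → ℝ) : Prop :=
  ∀ r t : Fin m, Lam st B r ∩ Lam' st B t = ∅ → γ r t = 0

/-- There is an `n`-path (for some `n ≥ 1`) from `t` to `r` in the matrix `γ`:
a sequence `i_0 = t, …, i_n = r` with `γ_{i_k, i_{k-1}} > 0` for `k = 1, …, n`. -/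
def IsPathFrom {m : ℕ} (γ : Fin m → Fin m → ℝ) (t r : Fin m) : Prop :=
  ∃ n : ℕ, 1 ≤ n ∧ ∃ c : ℕ → Fin m, c 0 = t ∧ c n = r ∧
    ∀ k, 1 ≤ k → k ≤ n → 0 < γ (c k) (c (k - 1))

/-- `r ∼ t`: there are paths both from `r` to `t` and from `t` to `r`. -/
def Conn {m : ℕ} (γ : Fin m → Fin m → ℝ) (r t : Fin m) : Prop :=
  IsPathFrom γ r t ∧ IsPathFrom γ t r

/-- A connected subset: `r ∼ t` for all `r, t ∈ V`. -/
def IsConnSet {m : ℕ} (γ : Fin m → Fin m → ℝ) (V : Finset (Fin m)) : Prop :=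
  ∀ r ∈ V, ∀ t ∈ V, Conn γ r t

/-- A connected component: a maximal (nonempty) connected subset. -/
def IsConnComp {m : ℕ} (γ : Fin m → Fin m → ℝ) (V : Finset (Fin m)) : Prop :=
  V.Nonempty ∧ IsConnSet γ V ∧ ∀ W : Finset (Fin m), IsConnSet γ W → V ⊆ W → W = V

/-- The spectral radius of a real square matrix: the largest modulus of a (complex)
eigenvalue. -/
def specRad {n : Type*} [Fintype n] [DecidableEq n] (A : Matrix n n ℝ) : ℝ :=
  sSup {x : ℝ | ∃ μ ∈ spectrum ℂ (A.map (algebraMap ℝ ℂ)), x = ‖μ‖}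

/-- The submatrix `G|_V` of `G = (γ_{rt})` indexed by a subset `V`. -/
def subMat {m : ℕ} (γ : Fin m → Fin m → ℝ) (V : Finset (Fin m)) :
    Matrix {x // x ∈ V} {x // x ∈ V} ℝ :=
  fun a b => γ a.1 b.1

/-- `(k,l)` is an ancestor of `(i,j)`: there is a chain `(i,j) = (i_0,j_0), …, (i_n,j_n) = (k,l)`
in `Σ_N × Σ_N` with `D_{i_τ j_τ} ⊆ D'_{i_{τ-1} j_{τ-1}}` for all `τ`. -/
def Ancestor (st : Setup) (i j k l : ℕ) : Prop :=
  ∃ n : ℕ, 1 ≤ n ∧ ∃ c : ℕ → ℕ × ℕ,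
    c 0 = (i, j) ∧ c n = (k, l) ∧
    (∀ τ ≤ n, 1 ≤ (c τ).1 ∧ (c τ).1 ≤ st.N ∧ 1 ≤ (c τ).2 ∧ (c τ).2 ≤ st.N) ∧
    ∀ τ, 1 ≤ τ → τ ≤ n →
      Dij st.N (c τ).1 (c τ).2 ⊆ Dij' st.N st.px st.py (c (τ - 1)).1 (c (τ - 1)).2

/-- `A(i,j) = {(i,j)} ∪ {ancestors of (i,j)}`. -/
def AncSet (st : Setup) (i j : ℕ) : Set (ℕ × ℕ) :=
  {(i, j)} ∪ {kl | Ancestor st i j kl.1 kl.2}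

/-- The pair `(i,j)` is degenerate: every `(k,l) ∈ A(i,j)` has all four vertical scaling
corner factors zero, or `z_{pq} = g_{kl}(x_p, y_q)` for all grid points `(x_p, y_q) ∈ D'_{kl}`. -/
def DegenPair (st : Setup) (i j : ℕ) : Prop :=
  ∀ kl ∈ AncSet st i j,
    (st.s (kl.1 - 1) (kl.2 - 1) = 0 ∧ st.s (kl.1 - 1) kl.2 = 0 ∧
      st.s kl.1 (kl.2 - 1) = 0 ∧ st.s kl.1 kl.2 = 0) ∨
    (∀ p ≤ st.N, ∀ q ≤ st.N, (xg st.N p, xg st.N q) ∈ Dij' st.N st.px st.py kl.1 kl.2 →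
      st.z p q = st.g kl.1 kl.2 (xg st.N p, xg st.N q))

/-- The index `r` is degenerate: every `(i,j) ∈ Λ_r` is degenerate. -/
def DegenIdx (st : Setup) {m : ℕ} (B : Fin m → Set (ℝ × ℝ)) (r : Fin m) : Prop :=
  ∀ ij ∈ Lam st B r, DegenPair st ij.1 ij.2

/-- A set `V` of indices is degenerate: every `r ∈ V` is degenerate. -/
def DegenComp (st : Setup) {m : ℕ} (B : Fin m → Set (ℝ × ℝ)) (V : Finset (Fin m)) : Prop :=
  ∀ r ∈ V, DegenIdx st B r

end RFIS

section Helpers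
open RFIS

lemma RFIS.mul_le_abs_mul (x y B : ℝ) (h : |y| ≤ B) : x * y ≤ |x| * B :=
  calc x * y ≤ |x * y| := le_abs_self _
    _ = |x| * |y| := abs_mul _ _
    _ ≤ |x| * B := mul_le_mul_of_nonneg_left h (abs_nonneg x)

lemma RFIS.bilin_bound (a b c d x y : ℝ) (hx : |x| ≤ 1) (hy : |y| ≤ 1) :
    |a + b * x + c * y + d * x * y| ≤ |a| + |b| + |c| + |d| := by
  have h1 : |b * x| ≤ |b| := by
    rw [abs_mul]
    nlinarith [abs_nonneg b, abs_nonneg x]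
  have h2 : |c * y| ≤ |c| := by
    rw [abs_mul]
    nlinarith [abs_nonneg c, abs_nonneg y]
  have h3 : |d * x * y| ≤ |d| := by
    rw [abs_mul, abs_mul]
    have hdx : |d| * |x| ≤ |d| := mul_le_of_le_one_right (abs_nonneg d) hx
    exact (mul_le_of_le_one_right (mul_nonneg (abs_nonneg d) (abs_nonneg x)) hy).trans hdx
  calc |a + b * x + c * y + d * x * y|
      ≤ |a + b * x + c * y| + |d * x * y| := abs_add_le _ _
    _ ≤ (|a| + |b * x| + |c * y|) + |d * x * y| := by
        linarith [abs_add_three a (b * x) (c * y)]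
    _ ≤ |a| + |b| + |c| + |d| := by linarith

lemma RFIS.bilin_diff (a b c d x y x' y' ε : ℝ) (hy : |y| ≤ 1) (hx' : |x'| ≤ 1)
    (hdx : |x - x'| ≤ ε) (hdy : |y - y'| ≤ ε) :
    |(a + b * x + c * y + d * x * y) - (a + b * x' + c * y' + d * x' * y')|
      ≤ (|b| + |c| + 2 * |d|) * ε := by
  have hε : 0 ≤ ε := le_trans (abs_nonneg _) hdx
  have h1 : |b * (x - x')| ≤ |b| * ε := by
    rw [abs_mul]; exact mul_le_mul_of_nonneg_left hdx (abs_nonneg b)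
  have h2 : |c * (y - y')| ≤ |c| * ε := by
    rw [abs_mul]; exact mul_le_mul_of_nonneg_left hdy (abs_nonneg c)
  have h3 : |(x - x') * y| ≤ ε := by
    rw [abs_mul]
    nlinarith [abs_nonneg (x - x'), abs_nonneg y]
  have h4 : |x' * (y - y')| ≤ ε := by
    rw [abs_mul]
    nlinarith [abs_nonneg x', abs_nonneg (y - y')]
  have h5 : |d * ((x - x') * y + x' * (y - y'))| ≤ |d| * (2 * ε) := by
    rw [abs_mul]
    have hsum : |(x - x') * y| + |x' * (y - y')| ≤ 2 * ε := by linarith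
    exact mul_le_mul_of_nonneg_left ((abs_add_le _ _).trans hsum) (abs_nonneg d)
  have hid : (a + b * x + c * y + d * x * y) - (a + b * x' + c * y' + d * x' * y')
      = b * (x - x') + c * (y - y') + d * ((x - x') * y + x' * (y - y')) := by ring
  rw [hid]
  calc |b * (x - x') + c * (y - y') + d * ((x - x') * y + x' * (y - y'))|
      ≤ |b * (x - x')| + |c * (y - y')| + |d * ((x - x') * y + x' * (y - y'))| :=
        abs_add_three _ _ _
    _ ≤ |b| * ε + |c| * ε + |d| * (2 * ε) := by linarith
    _ = (|b| + |c| + 2 * |d|) * ε := by ring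

lemma RFIS.xg_mem (N i : ℕ) (hN : 0 < N) (hiN : i ≤ N) : xg N i ∈ Icc (0:ℝ) 1 := by
  have hNpos : (0:ℝ) < N := by exact_mod_cast hN
  constructor
  · exact div_nonneg (Nat.cast_nonneg i) hNpos.le
  · rw [xg, div_le_one hNpos]; exact_mod_cast hiN

lemma RFIS.usub_key (N K : ℕ) (px : ℕ → ℕ) (i : ℕ) (hN : 0 < N) (hi : 1 ≤ i) (hK1 : 1 ≤ K)
    (hK : |xp N px i - xp N px (i - 1)| = (K : ℝ) * (xg N i - xg N (i - 1))) :
    (∀ t ∈ Ii' N px i, usub N px i t ∈ Ii N i) ∧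
      (∀ t t' : ℝ, |usub N px i t - usub N px i t'| ≤ |t - t'|) := by
  have hNpos : (0:ℝ) < N := by exact_mod_cast hN
  have hKpos : (0:ℝ) < K := by exact_mod_cast hK1
  have hcast : ((i - 1 : ℕ) : ℝ) = (i : ℝ) - 1 := by
    have := Nat.cast_sub (R := ℝ) hi; simpa using this
  have hΔ : xg N i - xg N (i - 1) = 1 / N := by
    unfold xg; rw [hcast]; ring
  have hΔpos : (0:ℝ) < xg N i - xg N (i - 1) := by rw [hΔ]; positivity
  set a := xp N px (i - 1) with ha
  set b := xp N px i with hb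
  have hbane : b - a ≠ 0 := by
    intro h
    rw [h, abs_zero] at hK
    nlinarith
  have hslope : |(xg N i - xg N (i - 1)) / (b - a)| ≤ 1 := by
    rw [abs_div, abs_of_pos hΔpos, hK, div_le_one (by positivity)]
    nlinarith [mul_le_mul_of_nonneg_right (show (1:ℝ) ≤ (K:ℝ) by exact_mod_cast hK1) hΔpos.le]
  constructor
  · intro t ht
    have hT : 0 ≤ (t - a) * (b - a) ∧ |t - a| ≤ |b - a| := by
      rcases le_total a b with h | h
      · rw [Ii', ← ha, ← hb, uIcc_of_le h] at ht
        obtain ⟨h1, h2⟩ := ht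
        refine ⟨by nlinarith, ?_⟩
        rw [abs_of_nonneg (by linarith), abs_of_nonneg (by linarith)]; linarith
      · rw [Ii', ← ha, ← hb, uIcc_of_ge h] at ht
        obtain ⟨h1, h2⟩ := ht
        refine ⟨by nlinarith, ?_⟩
        rw [abs_of_nonpos (by linarith), abs_of_nonpos (by linarith)]; linarith
    have hs0 : 0 ≤ (t - a) / (b - a) := by
      have : (t - a) / (b - a) = (t - a) * (b - a) / (b - a) ^ 2 := by
        field_simp
      rw [this]
      exact div_nonneg hT.1 (sq_nonneg _)
    have hs1 : (t - a) / (b - a) ≤ 1 := by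
      have habs : |(t - a) / (b - a)| ≤ 1 := by
        rw [abs_div, div_le_one (abs_pos.2 hbane)]; exact hT.2
      exact (le_abs_self _).trans habs
    have heq : usub N px i t
        = xg N (i - 1) + ((t - a) / (b - a)) * (xg N i - xg N (i - 1)) := by
      unfold usub; rw [← ha, ← hb]; ring
    rw [heq]
    constructor
    · nlinarith [mul_nonneg hs0 hΔpos.le]
    · nlinarith
  · intro t t'
    have heq : usub N px i t - usub N px i t'
        = (t - t') * ((xg N i - xg N (i - 1)) / (b - a)) := by
      unfold usub; rw [← ha, ← hb]; ring
    rw [heq, abs_mul]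
    exact mul_le_of_le_one_right (abs_nonneg _) hslope

end Helpers

open RFIS in
set_option maxHeartbeats 2000000 in
/-- Local oscillation estimate (from the proof of Lemma 4.3).  For each `(i,j)` there is
a constant `C_{ij} ≥ 0` (one may take the supremum, over `(x,y)` in the interior of
`D'_{ij}` and `z* ∈ [−M*, M*]` with `M* = max |f|`, of the Euclidean norm of the gradient
in `(x,y)` of `(x,y) ↦ F_{ij}(x,y,z*)`) such that for all `n ≥ 1`, all squares
`Dⁿ_{kl} ⊆ D'_{ij}` and any point `(x̄, ȳ) ∈ Dⁿ_{kl}`,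
`O(f, (u_i × v_j)(Dⁿ_{kl})) ≤ |S(u_i x̄, v_j ȳ)| O(f, Dⁿ_{kl}) + 2√2 C_{ij} εₙ`,
where `εₙ = 1/(Kⁿ N)`. -/
theorem local_oscillation_estimate (st : Setup) :
    ∀ i j, 1 ≤ i → i ≤ st.N → 1 ≤ j → j ≤ st.N →
      ∃ C : ℝ, 0 ≤ C ∧
        ∀ n : ℕ, 1 ≤ n → ∀ k l : ℕ,
          1 ≤ k → k ≤ st.K ^ n * st.N → 1 ≤ l → l ≤ st.K ^ n * st.N →
          Dn st.N st.K n k l ⊆ Dij' st.N st.px st.py i j →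
          ∀ p ∈ Dn st.N st.K n k l,
            Osc st.f
                ((fun q : ℝ × ℝ => (usub st.N st.px i q.1, usub st.N st.py j q.2)) ''
                  Dn st.N st.K n k l)
              ≤ |st.S (usub st.N st.px i p.1, usub st.N st.py j p.2)|
                    * Osc st.f (Dn st.N st.K n k l)
                + 2 * Real.sqrt 2 * C * (1 / ((st.K : ℝ) ^ n * (st.N : ℝ))) := by
  intro i j hi1 hiN hj1 hjN
  have hNpos : 0 < st.N := lt_of_lt_of_le Nat.zero_lt_two st.hN
  have hK1 : 1 ≤ st.K := le_trans (by norm_num) st.hK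
  have hNR : (0:ℝ) < (st.N : ℝ) := by exact_mod_cast hNpos
  obtain ⟨humem, hulip⟩ := usub_key st.N st.K st.px i hNpos hi1 hK1 (st.hKx i hi1 hiN)
  obtain ⟨hvmem, hvlip⟩ := usub_key st.N st.K st.py j hNpos hj1 hK1 (st.hKy j hj1 hjN)
  -- unit-interval bounds
  have hIi : Ii st.N i ⊆ Icc (0:ℝ) 1 :=
    Icc_subset_Icc (xg_mem st.N (i-1) hNpos (le_trans (Nat.sub_le i 1) hiN)).1
      (xg_mem st.N i hNpos hiN).2
  have hIj : Ii st.N j ⊆ Icc (0:ℝ) 1 :=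
    Icc_subset_Icc (xg_mem st.N (j-1) hNpos (le_trans (Nat.sub_le j 1) hjN)).1
      (xg_mem st.N j hNpos hjN).2
  have hIi' : Ii' st.N st.px i ⊆ Icc (0:ℝ) 1 :=
    uIcc_subset_Icc (xg_mem st.N _ hNpos (st.hpx (i-1) (le_trans (Nat.sub_le i 1) hiN)))
      (xg_mem st.N _ hNpos (st.hpx i hiN))
  have hIj' : Ii' st.N st.py j ⊆ Icc (0:ℝ) 1 :=
    uIcc_subset_Icc (xg_mem st.N _ hNpos (st.hpy (j-1) (le_trans (Nat.sub_le j 1) hjN)))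
      (xg_mem st.N _ hNpos (st.hpy j hjN))
  have hD'sq : Dij' st.N st.px st.py i j ⊆ sq := Set.prod_mono hIi' hIj'
  -- bound on f
  have hsqc : IsCompact sq := isCompact_Icc.prod isCompact_Icc
  obtain ⟨M0, hM0⟩ := hsqc.exists_bound_of_continuousOn st.hfcont
  set M : ℝ := max M0 0 with hMdef
  have hMnn : 0 ≤ M := le_max_right _ _
  have hMf : ∀ q ∈ sq, |st.f q| ≤ M := fun q hq => by
    have := hM0 q hq; rw [Real.norm_eq_abs] at this; exact this.trans (le_max_left _ _)
  -- bilinear coefficients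
  obtain ⟨aS, bS, cS, dS, hS⟩ := st.hSbil i j hi1 hiN hj1 hjN
  obtain ⟨ah, bh, ch, dh, hhb⟩ := st.hhbil i j hi1 hiN hj1 hjN
  obtain ⟨ag, bg, cg, dg, hgb⟩ := st.hgbil i j hi1 hiN hj1 hjN
  set LS : ℝ := |bS| + |cS| + 2 * |dS| with hLSdef
  set Lh : ℝ := |bh| + |ch| + 2 * |dh| with hLhdef
  set Lg : ℝ := |bg| + |cg| + 2 * |dg| with hLgdef
  set MS : ℝ := |aS| + |bS| + |cS| + |dS| with hMSdef
  set Mg : ℝ := |ag| + |bg| + |cg| + |dg| with hMgdef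
  have hLSnn : 0 ≤ LS := by rw [hLSdef]; positivity
  have hLhnn : 0 ≤ Lh := by rw [hLhdef]; positivity
  have hLgnn : 0 ≤ Lg := by rw [hLgdef]; positivity
  have hMSnn : 0 ≤ MS := by rw [hMSdef]; positivity
  have hMgnn : 0 ≤ Mg := by rw [hMgdef]; positivity
  set C : ℝ := 2 * LS * (M + Mg) + MS * Lg + Lh with hCdef
  have hCnn : 0 ≤ C := by
    have h1 : 0 ≤ 2 * LS * (M + Mg) :=
      mul_nonneg (mul_nonneg (by norm_num) hLSnn) (add_nonneg hMnn hMgnn)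
    have h2 : 0 ≤ MS * Lg := mul_nonneg hMSnn hLgnn
    rw [hCdef]; linarith
  refine ⟨C, hCnn, ?_⟩
  intro n hn k l hk1 hkK hl1 hlK hsub p hp
  set U : ℝ → ℝ := usub st.N st.px i with hUdef
  set V : ℝ → ℝ := usub st.N st.py j with hVdef
  set KN : ℝ := (st.K : ℝ) ^ n * (st.N : ℝ) with hKNdef
  have hKNpos : 0 < KN := by
    rw [hKNdef]
    exact mul_pos (pow_pos (by exact_mod_cast lt_of_lt_of_le Nat.zero_lt_one hK1) n) hNR
  set ε : ℝ := 1 / KN with hεdef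
  have hεnn : 0 ≤ ε := by rw [hεdef]; positivity
  set Dnkl := Dn st.N st.K n k l with hDdef
  -- coordinates of points of Dnkl are ε-close
  have hdist : ∀ p' ∈ Dnkl, ∀ q' ∈ Dnkl, |p'.1 - q'.1| ≤ ε ∧ |p'.2 - q'.2| ≤ ε := by
    intro p' hp' q' hq'
    rw [hDdef] at hp' hq'
    simp only [Dn, Set.mem_prod, Set.mem_Icc, ← hKNdef] at hp' hq'
    have h1 : (k : ℝ) / KN - ((k : ℝ) - 1) / KN = ε := by
      rw [hεdef, div_sub_div_same]; ring_nf
    have h2 : (l : ℝ) / KN - ((l : ℝ) - 1) / KN = ε := by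
      rw [hεdef, div_sub_div_same]; ring_nf
    constructor
    · rw [abs_le]
      constructor <;> [linarith only [hp'.1.1, hq'.1.2, h1]; linarith only [hp'.1.2, hq'.1.1, h1]]
    · rw [abs_le]
      constructor <;> [linarith only [hp'.2.1, hq'.2.2, h2]; linarith only [hp'.2.2, hq'.2.1, h2]]
  -- membership facts
  have hmemD' : ∀ q' ∈ Dnkl, q' ∈ Dij' st.N st.px st.py i j := fun q' hq' => hsub hq'
  have hUV : ∀ q' : ℝ × ℝ, q' ∈ Dij' st.N st.px st.py i j →
      (U q'.1, V q'.2) ∈ Dij st.N i j ∧ |U q'.1| ≤ 1 ∧ |V q'.2| ≤ 1 ∧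
        |q'.1| ≤ 1 ∧ |q'.2| ≤ 1 := by
    intro q' hq'
    have h1 : U q'.1 ∈ Ii st.N i := humem q'.1 hq'.1
    have h2 : V q'.2 ∈ Ii st.N j := hvmem q'.2 hq'.2
    have h1' := hIi h1
    have h2' := hIj h2
    have h3 := hIi' hq'.1
    have h4 := hIj' hq'.2
    exact ⟨⟨h1, h2⟩, abs_le.2 ⟨by linarith [h1'.1], h1'.2⟩,
      abs_le.2 ⟨by linarith [h2'.1], h2'.2⟩,
      abs_le.2 ⟨by linarith [h3.1], h3.2⟩, abs_le.2 ⟨by linarith [h4.1], h4.2⟩⟩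
  -- value formulas
  have hSval : ∀ q' : ℝ × ℝ, q' ∈ Dij' st.N st.px st.py i j →
      st.S (U q'.1, V q'.2) = aS + bS * U q'.1 + cS * V q'.2 + dS * U q'.1 * V q'.2 :=
    fun q' hq' => hS (U q'.1, V q'.2) (hUV q' hq').1
  have hhval : ∀ q' : ℝ × ℝ, q' ∈ Dij' st.N st.px st.py i j →
      st.h (U q'.1, V q'.2) = ah + bh * U q'.1 + ch * V q'.2 + dh * U q'.1 * V q'.2 :=
    fun q' hq' => hhb (U q'.1, V q'.2) (hUV q' hq').1
  have hgval : ∀ q' : ℝ × ℝ, q' ∈ Dij' st.N st.px st.py i j →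
      st.g i j q' = ag + bg * q'.1 + cg * q'.2 + dg * q'.1 * q'.2 :=
    fun q' hq' => hgb q' hq'
  have hpD' : p ∈ Dij' st.N st.px st.py i j := hmemD' p hp
  -- oscillation over Dnkl
  have hDsq : Dnkl ⊆ sq := fun q' hq' => hD'sq (hmemD' q' hq')
  have hObdd : BddAbove {d : ℝ | ∃ a ∈ Dnkl, ∃ b ∈ Dnkl, d = st.f a - st.f b} := by
    refine ⟨2 * M, ?_⟩
    rintro d ⟨a, ha, b, hb, rfl⟩
    have h1 := hMf a (hDsq ha)
    have h2 := hMf b (hDsq hb)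
    rw [abs_le] at h1 h2
    linarith [h1.2, h2.1]
  have hOeq : Osc st.f Dnkl = sSup {d : ℝ | ∃ a ∈ Dnkl, ∃ b ∈ Dnkl, d = st.f a - st.f b} :=
    rfl
  have hOnn : 0 ≤ Osc st.f Dnkl := by
    rw [hOeq]
    exact le_csSup hObdd ⟨p, hp, p, hp, by ring⟩
  have hOabs : ∀ p' ∈ Dnkl, ∀ q' ∈ Dnkl, |st.f p' - st.f q'| ≤ Osc st.f Dnkl := by
    intro p' hp' q' hq'
    rw [hOeq, abs_sub_le_iff]
    exact ⟨le_csSup hObdd ⟨p', hp', q', hq', rfl⟩, by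
      have := le_csSup hObdd ⟨q', hq', p', hp', rfl⟩; linarith⟩
  -- main bound
  have hsqrt2 : (1:ℝ) ≤ Real.sqrt 2 := by
    have := Real.sqrt_le_sqrt (show (1:ℝ) ≤ 2 by norm_num)
    rwa [Real.sqrt_one] at this
  have hRHSnn : 0 ≤ |st.S (U p.1, V p.2)| * Osc st.f Dnkl
      + 2 * Real.sqrt 2 * C * ε := by
    have h1 : 0 ≤ |st.S (U p.1, V p.2)| * Osc st.f Dnkl :=
      mul_nonneg (abs_nonneg _) hOnn
    have h2 : 0 ≤ 2 * Real.sqrt 2 * C * ε :=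
      mul_nonneg (mul_nonneg (mul_nonneg (by norm_num) (Real.sqrt_nonneg 2)) hCnn) hεnn
    linarith
  show Osc st.f ((fun q : ℝ × ℝ => (U q.1, V q.2)) '' Dnkl)
      ≤ |st.S (U p.1, V p.2)| * Osc st.f Dnkl + 2 * Real.sqrt 2 * C * ε
  rw [show Osc st.f ((fun q : ℝ × ℝ => (U q.1, V q.2)) '' Dnkl)
      = sSup {d : ℝ | ∃ a ∈ (fun q : ℝ × ℝ => (U q.1, V q.2)) '' Dnkl,
          ∃ b ∈ (fun q : ℝ × ℝ => (U q.1, V q.2)) '' Dnkl, d = st.f a - st.f b} from rfl]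
  apply Real.sSup_le _ hRHSnn
  rintro d ⟨A, ⟨p', hp', rfl⟩, B, ⟨q', hq', rfl⟩, rfl⟩
  dsimp only
  have hp'D := hmemD' p' hp'
  have hq'D := hmemD' q' hq'
  have e1 := st.hfeq i j hi1 hiN hj1 hjN p' hp'D
  have e2 := st.hfeq i j hi1 hiN hj1 hjN q' hq'D
  -- distances
  obtain ⟨hd1, hd2⟩ := hdist p' hp' p hp
  obtain ⟨hd3, hd4⟩ := hdist q' hq' p hp
  obtain ⟨hd5, hd6⟩ := hdist q' hq' p' hp'
  have hU1 : |U p'.1 - U p.1| ≤ ε := (hulip p'.1 p.1).trans hd1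
  have hV1 : |V p'.2 - V p.2| ≤ ε := (hvlip p'.2 p.2).trans hd2
  have hU2 : |U q'.1 - U p.1| ≤ ε := (hulip q'.1 p.1).trans hd3
  have hV2 : |V q'.2 - V p.2| ≤ ε := (hvlip q'.2 p.2).trans hd4
  have hU3 : |U p'.1 - U q'.1| ≤ ε := (hulip p'.1 q'.1).trans (abs_sub_comm q'.1 p'.1 ▸ hd5)
  have hV3 : |V p'.2 - V q'.2| ≤ ε := (hvlip p'.2 q'.2).trans (abs_sub_comm q'.2 p'.2 ▸ hd6)
  obtain ⟨-, hUp', hVp', hxp', hyp'⟩ := hUV p' hp'D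
  obtain ⟨-, hUq', hVq', hxq', hyq'⟩ := hUV q' hq'D
  obtain ⟨-, hUp, hVp, -, -⟩ := hUV p hpD'
  -- Lipschitz-type difference bounds
  have hSd1 : |st.S (U p'.1, V p'.2) - st.S (U p.1, V p.2)| ≤ LS * ε := by
    rw [hSval p' hp'D, hSval p hpD', hLSdef]
    exact bilin_diff aS bS cS dS _ _ _ _ ε hVp' hUp hU1 hV1
  have hSd2 : |st.S (U q'.1, V q'.2) - st.S (U p.1, V p.2)| ≤ LS * ε := by
    rw [hSval q' hq'D, hSval p hpD', hLSdef]
    exact bilin_diff aS bS cS dS _ _ _ _ ε hVq' hUp hU2 hV2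
  have hgd : |st.g i j q' - st.g i j p'| ≤ Lg * ε := by
    rw [hgval q' hq'D, hgval p' hp'D, hLgdef]
    exact bilin_diff ag bg cg dg _ _ _ _ ε hyq' hxp' hd5 hd6
  have hhd : |st.h (U p'.1, V p'.2) - st.h (U q'.1, V q'.2)| ≤ Lh * ε := by
    rw [hhval p' hp'D, hhval q' hq'D, hLhdef]
    exact bilin_diff ah bh ch dh _ _ _ _ ε hVp' hUq' hU3 hV3
  have hSbarb : |st.S (U p.1, V p.2)| ≤ MS := by
    rw [hSval p hpD', hMSdef]
    exact bilin_bound aS bS cS dS _ _ hUp hVp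
  -- magnitude bounds
  have hgbp' : |st.g i j p'| ≤ Mg := by
    rw [hgval p' hp'D, hMgdef]
    exact bilin_bound ag bg cg dg _ _ hxp' hyp'
  have hgbq' : |st.g i j q'| ≤ Mg := by
    rw [hgval q' hq'D, hMgdef]
    exact bilin_bound ag bg cg dg _ _ hxq' hyq'
  have hfp' := hMf p' (hD'sq hp'D)
  have hfq' := hMf q' (hD'sq hq'D)
  have hfg1 : |st.f p' - st.g i j p'| ≤ M + Mg :=
    (abs_sub _ _).trans (add_le_add hfp' hgbp')
  have hfg2 : |st.f q' - st.g i j q'| ≤ M + Mg :=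
    (abs_sub _ _).trans (add_le_add hfq' hgbq')
  have hOsc : |st.f p' - st.f q'| ≤ Osc st.f Dnkl := hOabs p' hp' q' hq'
  -- algebraic identity
  have hid : st.f (U p'.1, V p'.2) - st.f (U q'.1, V q'.2)
      = st.S (U p.1, V p.2) * (st.f p' - st.f q')
        + (st.S (U p'.1, V p'.2) - st.S (U p.1, V p.2)) * (st.f p' - st.g i j p')
        + (st.S (U p.1, V p.2) - st.S (U q'.1, V q'.2)) * (st.f q' - st.g i j q')
        + st.S (U p.1, V p.2) * (st.g i j q' - st.g i j p')
        + (st.h (U p'.1, V p'.2) - st.h (U q'.1, V q'.2)) := by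
    rw [e1, e2]; ring
  rw [hid]
  have t1 : st.S (U p.1, V p.2) * (st.f p' - st.f q')
      ≤ |st.S (U p.1, V p.2)| * Osc st.f Dnkl := mul_le_abs_mul _ _ _ hOsc
  have t2 : (st.S (U p'.1, V p'.2) - st.S (U p.1, V p.2)) * (st.f p' - st.g i j p')
      ≤ LS * ε * (M + Mg) := by
    have := mul_le_abs_mul (st.S (U p'.1, V p'.2) - st.S (U p.1, V p.2)) _ _ hfg1
    have h2 : |st.S (U p'.1, V p'.2) - st.S (U p.1, V p.2)| * (M + Mg)
        ≤ LS * ε * (M + Mg) :=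
      mul_le_mul_of_nonneg_right hSd1 (add_nonneg hMnn hMgnn)
    linarith only [this, h2]
  have t3 : (st.S (U p.1, V p.2) - st.S (U q'.1, V q'.2)) * (st.f q' - st.g i j q')
      ≤ LS * ε * (M + Mg) := by
    have := mul_le_abs_mul (st.S (U p.1, V p.2) - st.S (U q'.1, V q'.2)) _ _ hfg2
    have h2 : |st.S (U p.1, V p.2) - st.S (U q'.1, V q'.2)| * (M + Mg)
        ≤ LS * ε * (M + Mg) := by
      rw [abs_sub_comm]
      exact mul_le_mul_of_nonneg_right hSd2 (add_nonneg hMnn hMgnn)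
    linarith only [this, h2]
  have t4 : st.S (U p.1, V p.2) * (st.g i j q' - st.g i j p') ≤ MS * (Lg * ε) := by
    have := mul_le_abs_mul (st.S (U p.1, V p.2)) _ _ hgd
    have h2 : |st.S (U p.1, V p.2)| * (Lg * ε) ≤ MS * (Lg * ε) :=
      mul_le_mul_of_nonneg_right hSbarb (mul_nonneg hLgnn hεnn)
    linarith only [this, h2]
  have t5 : st.h (U p'.1, V p'.2) - st.h (U q'.1, V q'.2) ≤ Lh * ε :=
    (le_abs_self _).trans hhd
  have hsum : LS * ε * (M + Mg) + LS * ε * (M + Mg) + MS * (Lg * ε) + Lh * ε = C * ε := by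
    rw [hCdef]; ring
  have hCε : C * ε ≤ 2 * Real.sqrt 2 * C * ε := by
    have h := le_mul_of_one_le_left (mul_nonneg hCnn hεnn)
      (show (1:ℝ) ≤ 2 * Real.sqrt 2 by linarith only [hsqrt2])
    linarith only [h]
  linarith only [t1, t2, t3, t4, t5, hsum, hCε]
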